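/- Let m, t ≥ 2 be integers and n = mt. Then the colon ideal L = (J_{n,m}^t : x_1 x_2 ⋯ x_{mt−1}) equals (x_m, x_{2m}, …, x_{mt}). -/

import Mathlib

/-!
Give `x_i` weight `1` when `i ≡ -1 (mod m)` and weight `0` otherwise. Every generator
`x_i ⋯ x_{i+m-1}` of `J = J_{mt,m}` has weight exactly `1`, so `J^t` lies in the monomial ideal
spanned by the monomials of weight `≥ t`, while `u = x_0 ⋯ x_{mt-2}` has weight `t - 1`. Hence
`f u ∈ J^t` forces every monomial of `f` to have positive weight, i.e. to be divisible by some
`x_{km-1}`. Conversely, `x_{km-1} u` splits into `t` blocks of `m` consecutive variables, starting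
at `0, m, …, (k-1)m` and at `km-1, (k+1)m-1, …, (t-1)m-1`, so it is a product of `t` generators.
-/

open MvPolynomial

/-- The `m`-path ideal of the cycle graph of length `n`, as an ideal of
`S = K[x_0, …, x_{n-1}]` (variables indexed by `ZMod n`): it is generated by the
`n` monomials `x_i x_{i+1} ⋯ x_{i+m-1}`, indices taken modulo `n`. -/
noncomputable def cyclePathIdeal (K : Type*) [Field K] (n m : ℕ) :
    Ideal (MvPolynomial (ZMod n) K) :=
  Ideal.span { p | ∃ i : ZMod n, p = ∏ j ∈ Finset.range m, X (i + (j : ZMod n)) }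

/-- The maximal graded ideal `(x_0, …, x_{n-1})` of `K[x_i : i ∈ σ]`. -/
noncomputable def maxIdeal (K : Type*) [Field K] (σ : Type*) :
    Ideal (MvPolynomial σ K) :=
  Ideal.span (Set.range (X : σ → MvPolynomial σ K))

open Finset

lemma Finsupp.weight_mono {σ : Type*} (w : σ → ℕ) {s d : σ →₀ ℕ} (h : s ≤ d) :
    s.weight w ≤ d.weight w := by
  obtain ⟨c, rfl⟩ := le_iff_exists_add.mp h
  simp

namespace MvPolynomial

variable {σ R : Type*} [CommSemiring R] (w : σ → ℕ)

noncomputable def weightGeIdeal (a : ℕ) : Ideal (MvPolynomial σ R) :=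
  Ideal.span ((fun s => monomial s 1) '' {s | a ≤ s.weight w})

variable {w}

lemma mem_weightGeIdeal_iff {a : ℕ} {f : MvPolynomial σ R} :
    f ∈ weightGeIdeal w a ↔ ∀ d ∈ f.support, a ≤ d.weight w := by
  rw [weightGeIdeal, mem_ideal_span_monomial_image]
  exact forall₂_congr fun d _ =>
    ⟨fun ⟨s, hs, hsd⟩ => hs.trans (Finsupp.weight_mono w hsd), fun h => ⟨d, h, le_rfl⟩⟩

lemma monomial_mem_weightGeIdeal {a : ℕ} {s : σ →₀ ℕ} (h : a ≤ s.weight w) :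
    monomial s (1 : R) ∈ weightGeIdeal w a :=
  Ideal.subset_span ⟨s, h, rfl⟩

lemma weightGeIdeal_mul_le (a b : ℕ) :
    weightGeIdeal w a * weightGeIdeal w b ≤
      (weightGeIdeal w (a + b) : Ideal (MvPolynomial σ R)) := by
  rw [weightGeIdeal, weightGeIdeal, Ideal.span_mul_span', Ideal.span_le]
  rintro _ ⟨_, ⟨s, hs, rfl⟩, _, ⟨s', hs', rfl⟩, rfl⟩
  show monomial s 1 * monomial s' 1 ∈ _
  rw [monomial_mul, one_mul]
  exact monomial_mem_weightGeIdeal (by simp only [map_add]; exact add_le_add hs hs')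

lemma pow_le_weightGeIdeal {I : Ideal (MvPolynomial σ R)} {a : ℕ} (h : I ≤ weightGeIdeal w a) :
    ∀ t : ℕ, I ^ t ≤ weightGeIdeal w (t * a)
  | 0 => by
    rw [pow_zero, zero_mul, Ideal.one_eq_top, top_le_iff, Ideal.eq_top_iff_one, one_def]
    exact monomial_mem_weightGeIdeal (Nat.zero_le _)
  | t + 1 => by
    rw [pow_succ, add_mul, one_mul]
    exact (Ideal.mul_mono (pow_le_weightGeIdeal h t) h).trans (weightGeIdeal_mul_le _ _)

lemma mem_weightGeIdeal_of_mul_monomial_mem {a : ℕ} {f : MvPolynomial σ R} {e : σ →₀ ℕ}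
    (h : f * monomial e 1 ∈ weightGeIdeal w a) : f ∈ weightGeIdeal w (a - e.weight w) := by
  rw [mem_weightGeIdeal_iff] at h ⊢
  intro d hd
  have hde : d + e ∈ (f * monomial e 1).support := by
    rwa [mem_support_iff, coeff_mul_monomial, mul_one, ← mem_support_iff]
  have := h _ hde
  rw [map_add] at this
  omega

lemma weightGeIdeal_one_le_span_X :
    weightGeIdeal w 1 ≤ (Ideal.span (X '' {i | w i ≠ 0}) : Ideal (MvPolynomial σ R)) := by
  intro f hf
  rw [mem_ideal_span_X_image]
  intro d hd
  have hpos := mem_weightGeIdeal_iff.mp hf d hd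
  rw [Finsupp.weight_apply, Finsupp.sum] at hpos
  obtain ⟨i, -, hi⟩ := Finset.exists_ne_zero_of_sum_ne_zero (Nat.one_le_iff_ne_zero.mp hpos)
  exact ⟨i, right_ne_zero_of_mul hi, left_ne_zero_of_mul hi⟩

lemma prod_X_eq_monomial_sum_single {ι : Type*} (s : Finset ι) (g : ι → σ) :
    ∏ i ∈ s, (X (g i) : MvPolynomial σ R) = monomial (∑ i ∈ s, Finsupp.single (g i) 1) 1 :=
  (monomial_sum_one s _).symm

lemma weight_sum_single_one {ι : Type*} (s : Finset ι) (g : ι → σ) :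
    (∑ i ∈ s, Finsupp.single (g i) 1).weight w = ∑ i ∈ s, w (g i) := by
  simp [map_sum, Finsupp.weight_single]

end MvPolynomial

namespace Finset

variable {M : Type*} [CommMonoid M]

@[to_additive]
lemma prod_range_mul_eq_prod_prod (f : ℕ → M) (k m : ℕ) :
    ∏ c ∈ range (k * m), f c = ∏ j ∈ range k, ∏ i ∈ range m, f (j * m + i) := by
  induction k with
  | zero => simp
  | succ k ih => rw [prod_range_succ, ← ih, Nat.succ_mul, prod_range_add]

@[to_additive]
lemma mul_prod_range_eq_prod_blocks (f : ℕ → M) {m k t : ℕ} (hm : 1 ≤ m) (hk : 1 ≤ k)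
    (hkt : k ≤ t) :
    f (k * m - 1) * ∏ c ∈ range (m * t - 1), f c =
      (∏ j ∈ range k, ∏ i ∈ range m, f (j * m + i)) *
        ∏ j ∈ range (t - k), ∏ i ∈ range m, f (k * m - 1 + j * m + i) := by
  obtain ⟨r, rfl⟩ := Nat.exists_eq_add_of_le hkt
  obtain ⟨a, ha⟩ := Nat.exists_eq_add_of_le (Nat.one_le_iff_ne_zero.mpr (Nat.mul_ne_zero
    (Nat.one_le_iff_ne_zero.mp hk) (Nat.one_le_iff_ne_zero.mp hm)))
  have hmt : m * (k + r) - 1 = a + r * m := by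
    rw [Nat.mul_add, Nat.mul_comm m k, Nat.mul_comm m r, ha]; omega
  simp only [add_assoc]
  rw [← prod_range_mul_eq_prod_prod, ← prod_range_mul_eq_prod_prod (fun c => f (k * m - 1 + c)),
    hmt, ha, Nat.add_sub_cancel_left, Nat.add_sub_cancel_left, prod_range_add, add_comm 1 a,
    prod_range_succ]
  ac_rfl

end Finset

namespace ZMod

lemma card_filter_range_add_natCast_eq {m : ℕ} [NeZero m] (x c : ZMod m) :
    #{j ∈ range m | x + ((j : ℕ) : ZMod m) = c} = 1 := by
  rw [card_eq_one]
  refine ⟨(c - x).val, Finset.ext fun j => ?_⟩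
  rw [mem_filter, mem_range, mem_singleton, ← eq_sub_iff_add_eq']
  constructor
  · rintro ⟨hj, h⟩
    rw [← h, val_cast_of_lt hj]
  · rintro rfl
    exact ⟨val_lt _, natCast_zmod_val _⟩

end ZMod

section CyclePathIdeal

variable (K : Type*) [Field K]

lemma prod_range_X_natCast_add_mem_cyclePathIdeal (n m b : ℕ) :
    ∏ i ∈ range m, (X ((b + i : ℕ) : ZMod n) : MvPolynomial (ZMod n) K) ∈
      cyclePathIdeal K n m :=
  Ideal.subset_span ⟨b, by push_cast; rfl⟩

lemma prod_range_prod_range_X_mem_pow_cyclePathIdeal (n m k : ℕ) (b : ℕ → ℕ) :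
    ∏ j ∈ range k, ∏ i ∈ range m,
        (X ((b j + i : ℕ) : ZMod n) : MvPolynomial (ZMod n) K) ∈ cyclePathIdeal K n m ^ k := by
  simpa using Ideal.prod_mem_prod fun j (_ : j ∈ range k) =>
    prod_range_X_natCast_add_mem_cyclePathIdeal K n m (b j)

end CyclePathIdeal

section BlockEnd

variable {m t : ℕ}

/-- Indicator of the residue class `-1 mod m` on `ZMod (m * t)`: with variables indexed from `0`,
it marks `x_{m-1}, x_{2m-1}, …, x_{mt-1}`, the paper's `x_m, x_{2m}, …, x_{mt}`. -/
def blockEnd (m t : ℕ) (a : ZMod (m * t)) : ℕ :=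
  if ZMod.castHom (dvd_mul_right m t) (ZMod m) a = -1 then 1 else 0

lemma sum_range_blockEnd_add_natCast [NeZero m] (i : ZMod (m * t)) :
    ∑ j ∈ range m, blockEnd m t (i + j) = 1 := by
  simp only [blockEnd, map_add, map_natCast]
  rw [sum_boole, ZMod.card_filter_range_add_natCast_eq, Nat.cast_one]

lemma blockEnd_natCast_mul_sub_one {k : ℕ} (hkm : 1 ≤ k * m) :
    blockEnd m t ((k * m - 1 : ℕ) : ZMod (m * t)) = 1 := by
  rw [blockEnd, map_natCast, if_pos]
  rw [eq_neg_iff_add_eq_zero, ← Nat.cast_one (R := ZMod m), ← Nat.cast_add,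
    Nat.sub_add_cancel hkm, Nat.cast_mul, ZMod.natCast_self, mul_zero]

lemma one_add_sum_range_blockEnd (hm : 1 ≤ m) (ht : 1 ≤ t) :
    1 + ∑ c ∈ range (m * t - 1), blockEnd m t c = t := by
  have : NeZero m := ⟨by omega⟩
  have h := add_sum_range_eq_sum_blocks (fun c => blockEnd m t c) hm le_rfl ht
  simp only [Nat.cast_add, sum_range_blockEnd_add_natCast, sum_const, card_range, smul_eq_mul,
    mul_one, blockEnd_natCast_mul_sub_one (by omega : 1 ≤ 1 * m)] at h
  omega

lemma exists_eq_natCast_mul_sub_one_of_blockEnd_ne_zero [NeZero (m * t)] {a : ZMod (m * t)}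
    (h : blockEnd m t a ≠ 0) :
    ∃ k, 1 ≤ k ∧ k ≤ t ∧ a = ((k * m - 1 : ℕ) : ZMod (m * t)) := by
  have hval : ((a.val + 1 : ℕ) : ZMod m) = 0 := by
    rw [blockEnd, ite_ne_right_iff, ← ZMod.natCast_zmod_val a, map_natCast] at h
    rw [Nat.cast_succ, h.1, neg_add_cancel]
  obtain ⟨k, hk⟩ := (ZMod.natCast_eq_zero_iff _ _).mp hval
  have hlt : m * k ≤ m * t := by rw [← hk]; exact ZMod.val_lt a
  have hm : 0 < m := Nat.pos_of_ne_zero (left_ne_zero_of_mul (NeZero.ne (m * t)))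
  have hka : k * m - 1 = a.val := by rw [Nat.mul_comm, ← hk, Nat.add_sub_cancel]
  refine ⟨k, Nat.pos_of_ne_zero ?_, Nat.le_of_mul_le_mul_left hlt hm, ?_⟩
  · rintro rfl
    simp at hk
  · rw [hka, ZMod.natCast_zmod_val]

variable (K : Type*) [Field K]

lemma cyclePathIdeal_le_weightGeIdeal [NeZero m] :
    cyclePathIdeal K (m * t) m ≤ weightGeIdeal (blockEnd m t) 1 := by
  rw [cyclePathIdeal, Ideal.span_le]
  rintro _ ⟨i, rfl⟩
  rw [prod_X_eq_monomial_sum_single]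
  exact monomial_mem_weightGeIdeal
    (by rw [weight_sum_single_one, sum_range_blockEnd_add_natCast])

lemma X_mul_prod_range_X_mem_pow_cyclePathIdeal (hm : 1 ≤ m) {k : ℕ} (hk : 1 ≤ k)
    (hkt : k ≤ t) :
    X ((k * m - 1 : ℕ) : ZMod (m * t)) *
        ∏ c ∈ range (m * t - 1), (X (c : ZMod (m * t)) : MvPolynomial (ZMod (m * t)) K) ∈
      cyclePathIdeal K (m * t) m ^ t := by
  have hpow : cyclePathIdeal K (m * t) m ^ t =
      cyclePathIdeal K (m * t) m ^ k * cyclePathIdeal K (m * t) m ^ (t - k) := by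
    rw [← pow_add, Nat.add_sub_cancel' hkt]
  rw [mul_prod_range_eq_prod_blocks (fun c => (X (c : ZMod (m * t)) : MvPolynomial _ K)) hm hk
    hkt, hpow]
  exact Ideal.mul_mem_mul (prod_range_prod_range_X_mem_pow_cyclePathIdeal K _ m k (· * m))
    (prod_range_prod_range_X_mem_pow_cyclePathIdeal K _ m (t - k) (k * m - 1 + · * m))

end BlockEnd

/-- For `m, t ≥ 2` and `n = mt`, the colon ideal `(J_{n,m}^t : x_1 x_2 ⋯ x_{mt-1})`
equals `(x_m, x_{2m}, …, x_{mt})`. -/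
theorem colon_eq_of_n_eq_mt
    (K : Type*) [Field K] (n m t : ℕ) (hm : 2 ≤ m) (ht : 2 ≤ t) (hn : n = m * t) :
    ((cyclePathIdeal K n m) ^ t).colon
        (Ideal.span {(∏ k ∈ Finset.range (m * t - 1), X ((k : ℕ) : ZMod n) :
          MvPolynomial (ZMod n) K)}) =
      Ideal.span { p : MvPolynomial (ZMod n) K |
        ∃ k : ℕ, 1 ≤ k ∧ k ≤ t ∧ p = X ((k * m - 1 : ℕ) : ZMod n) } := by
  subst hn
  have : NeZero m := ⟨by omega⟩
  have : NeZero (m * t) := ⟨by positivity⟩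
  apply le_antisymm
  · intro f hf
    rw [Ideal.mem_colon_span_singleton, prod_X_eq_monomial_sum_single] at hf
    have hf' := mem_weightGeIdeal_of_mul_monomial_mem
      (pow_le_weightGeIdeal (cyclePathIdeal_le_weightGeIdeal K) t hf)
    have hweight := one_add_sum_range_blockEnd (m := m) (by omega) (by omega : 1 ≤ t)
    rw [weight_sum_single_one, mul_one, show t - _ = 1 by omega] at hf'
    refine Ideal.span_mono ?_ (weightGeIdeal_one_le_span_X hf')
    rintro _ ⟨a, ha, rfl⟩
    obtain ⟨k, hk, hkt, rfl⟩ := exists_eq_natCast_mul_sub_one_of_blockEnd_ne_zero ha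
    exact ⟨k, hk, hkt, rfl⟩
  · rw [Ideal.span_le]
    rintro _ ⟨k, hk, hkt, rfl⟩
    exact Ideal.mem_colon_span_singleton.mpr
      (X_mul_prod_range_X_mem_pow_cyclePathIdeal K (by omega) hk hkt)
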